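/- The global sections functor is left adjoint to the Yoneda embedding into Poly: for a polynomial functor P = ∐_{i ∈ I} Fin(pᵢ, –) and any finite set k, the set of natural transformations P ⟶ Fin(k, –) is in bijection, naturally in P and k, with the set of functions k → ∏_{i ∈ I} pᵢ. -/

import Mathlib

/- STATEMENT 19: The global sections functor is left adjoint to the Yoneda embedding into
`Poly`: for a polynomial functor `P = ∐_{i ∈ I} Fin(pᵢ, –)` and any finite set `k`, the set
of natural transformations `P ⟶ Fin(k, –)` is in bijection, naturally in `P` and `k`, with
the set of functions `k → ∏_{i ∈ I} pᵢ`.  We state this as: there is a functor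
`Γ : Poly ⥤ FintypeCatᵒᵖ` with `Γ(∐ᵢ Fin(pᵢ, –)) ≅ ∏ᵢ pᵢ`, and a functor
`Y : FintypeCatᵒᵖ ⥤ Poly` with `Y(k) ≅ Fin(k, –)`, together with an adjunction `Γ ⊣ Y`
(whose hom-set bijections, natural in `P` and `k`, are exactly
`(P ⟶ Fin(k, –)) ≃ (k ⟶ ∏ᵢ pᵢ)`). -/

open CategoryTheory CategoryTheory.Limits Opposite

noncomputable section

noncomputable instance (X Y : FintypeCat.{0}) : Fintype (X ⟶ Y) := by
  classical exact Fintype.ofFinite (X ⟶ Y)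

/-- The finite coproduct `∐ᵢ Fin(kᵢ, –)` of corepresentable functors `FintypeCat ⥤ FintypeCat`. -/
def polySum {I : Type} [Fintype I] (k : I → FintypeCat.{0}) :
    FintypeCat.{0} ⥤ FintypeCat.{0} where
  obj X := FintypeCat.of (Σ i, (k i ⟶ X))
  map f := FintypeCat.homMk fun x => ⟨x.1, x.2 ≫ f⟩
  map_id X := FintypeCat.hom_ext _ _ fun _ => rfl
  map_comp f g := FintypeCat.hom_ext _ _ fun _ => rfl

/-- A polynomial functor is a finite coproduct of corepresentables. -/
def IsPolynomial (P : FintypeCat.{0} ⥤ FintypeCat.{0}) : Prop :=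
  ∃ (I : Type) (_ : Fintype I) (k : I → FintypeCat.{0}), Nonempty (P ≅ polySum k)

/-- The category of polynomial functors. -/
abbrev PolyCat := ObjectProperty.FullSubcategory IsPolynomial

/-- The cartesian product `∏ᵢ pᵢ` of a finite family of finite sets, as a finite set. -/
noncomputable def piFin {I : Type} [Fintype I] (p : I → FintypeCat.{0}) : FintypeCat.{0} :=
  letI : DecidableEq I := Classical.decEq I
  FintypeCat.of (∀ i, p i)

/-! The global sections of `P` are the natural transformations `P ⟶ 𝟭 = Fin(1, –)`. By the
Yoneda lemma, a natural transformation out of `∐ᵢ Fin(pᵢ, –)` is a choice of an element of each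
`pᵢ`, so `Γ(∐ᵢ Fin(pᵢ, –)) ≅ ∏ᵢ pᵢ`. Since `Fin(k, –)` is the `k`-fold power of `𝟭`, a natural
transformation `P ⟶ Fin(k, –)` is a `k`-indexed family of global sections of `P`, i.e. a map
`k → Γ(P)`. This bijection is natural in `k`, which determines `Γ` on morphisms as the left
adjoint of `k ↦ Fin(k, –)`. -/

namespace PolyCat

def polySumHomEquiv {I : Type} [Fintype I] (p : I → FintypeCat.{0})
    (F : FintypeCat.{0} ⥤ FintypeCat.{0}) : (polySum p ⟶ F) ≃ ∀ i, F.obj (p i) where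
  toFun α i := α.app (p i) ⟨i, 𝟙 (p i)⟩
  invFun v :=
    { app X := FintypeCat.homMk fun x => F.map x.2 (v x.1)
      naturality X Y f := by
        ext ⟨i, g⟩
        exact ConcreteCategory.congr_hom (F.map_comp g f) (v i) }
  left_inv α := by
    ext X ⟨i, g⟩
    exact (FunctorToFintypeCat.naturality _ _ α g ⟨i, 𝟙 (p i)⟩).symm
  right_inv v := by
    funext i
    exact ConcreteCategory.congr_hom (F.map_id (p i)) (v i)

abbrev corep (k : FintypeCat.{0}) : FintypeCat.{0} ⥤ FintypeCat.{0} :=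
  polySum fun _ : PUnit => k

def homCorepEquiv (P : FintypeCat.{0} ⥤ FintypeCat.{0}) (k : FintypeCat.{0}) :
    (P ⟶ corep k) ≃ (k → (P ⟶ 𝟭 FintypeCat.{0})) where
  toFun α c :=
    { app X := FintypeCat.homMk fun x => (α.app X x).2 c
      naturality X Y f := by
        ext x
        exact congrArg (fun y : (corep k).obj Y => y.2 c)
          (FunctorToFintypeCat.naturality _ _ α f x) }
  invFun β :=
    { app X := FintypeCat.homMk fun x => ⟨⟨⟩, FintypeCat.homMk fun c => (β c).app X x⟩
      naturality X Y f := by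
        ext x
        refine Sigma.ext rfl (heq_of_eq ?_)
        ext c
        exact FunctorToFintypeCat.naturality _ _ (β c) f x }
  left_inv α := rfl
  right_inv β := rfl

def corepFunctor : FintypeCat.{0}ᵒᵖ ⥤ (FintypeCat.{0} ⥤ FintypeCat.{0}) where
  obj k := corep k.unop
  map f := { app X := FintypeCat.homMk fun x => ⟨x.1, f.unop ≫ x.2⟩ }

lemma isPolynomial_corep (k : FintypeCat.{0}) : IsPolynomial (corep k) :=
  ⟨PUnit, inferInstance, fun _ => k, ⟨Iso.refl _⟩⟩

def yoneda : FintypeCat.{0}ᵒᵖ ⥤ PolyCat :=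
  ObjectProperty.lift _ corepFunctor fun k => isPolynomial_corep k.unop

def homIdEquivOfIso {P : FintypeCat.{0} ⥤ FintypeCat.{0}} {I : Type} [Fintype I]
    {p : I → FintypeCat.{0}} (e : P ≅ polySum p) : (P ⟶ 𝟭 FintypeCat.{0}) ≃ ∀ i, p i :=
  (e.homCongr (Iso.refl _)).trans (polySumHomEquiv p _)

instance (P : PolyCat) : Finite (P.obj ⟶ 𝟭 FintypeCat.{0}) := by
  obtain ⟨I, _, p, ⟨e⟩⟩ := P.property
  exact Finite.of_equiv _ (homIdEquivOfIso e).symm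

/-- `Shrink` moves the natural transformations `P ⟶ 𝟭`, which form a `Type 1`, down to `Type`. -/
def globalSections (P : PolyCat) : FintypeCat.{0} :=
  FintypeCat.of (Shrink.{0} (P.obj ⟶ 𝟭 FintypeCat.{0}))

def globalSectionsEquiv (P : PolyCat) : globalSections P ≃ (P.obj ⟶ 𝟭 FintypeCat.{0}) :=
  (equivShrink _).symm

def homYonedaEquiv (P : PolyCat) (k : FintypeCat.{0}ᵒᵖ) :
    (op (globalSections P) ⟶ k) ≃ (P ⟶ yoneda.obj k) :=
  (opEquiv _ k).trans <| InducedCategory.homEquiv.trans <| TypeCat.homEquiv.trans <|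
    (Equiv.arrowCongr (Equiv.refl _) (globalSectionsEquiv P)).trans <|
      (homCorepEquiv P.obj k.unop).symm.trans
        ((ObjectProperty.fullyFaithfulι IsPolynomial).homEquiv (X := P) (Y := yoneda.obj k)).symm

lemma homYonedaEquiv_comp (P : PolyCat) (k k' : FintypeCat.{0}ᵒᵖ) (g : k ⟶ k')
    (h : op (globalSections P) ⟶ k) :
    homYonedaEquiv P k' (h ≫ g) = homYonedaEquiv P k h ≫ yoneda.map g :=
  rfl

def globalSectionsFunctor : PolyCat ⥤ FintypeCat.{0}ᵒᵖ :=
  Adjunction.leftAdjointOfEquiv homYonedaEquiv homYonedaEquiv_comp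

def globalSectionsAdjunction : globalSectionsFunctor ⊣ yoneda :=
  Adjunction.adjunctionOfEquivLeft homYonedaEquiv homYonedaEquiv_comp

def globalSectionsIsoPiFin {P : PolyCat} {I : Type} [Fintype I] {p : I → FintypeCat.{0}}
    (e : P.obj ≅ polySum p) : globalSectionsFunctor.obj P ≅ op (piFin p) :=
  (FintypeCat.equivEquivIso ((globalSectionsEquiv P).trans (homIdEquivOfIso e))).symm.op

end PolyCat

theorem globalSections_adjoint_yoneda :
    ∃ (G : PolyCat ⥤ FintypeCat.{0}ᵒᵖ) (Y : FintypeCat.{0}ᵒᵖ ⥤ PolyCat),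
      -- `G` is the global sections functor: on a polynomial `∐ᵢ Fin(pᵢ, –)` it is `∏ᵢ pᵢ`
      (∀ (P : PolyCat) (I : Type) (_ : Fintype I) (p : I → FintypeCat.{0}),
        (P.obj ≅ polySum p) → Nonempty (G.obj P ≅ op (piFin p))) ∧
      -- `Y` is the Yoneda embedding `k ↦ Fin(k, –)`
      (∀ k : FintypeCat.{0},
        Nonempty ((Y.obj (op k)).obj ≅ polySum (fun _ : PUnit => k))) ∧
      -- the adjunction `Γ ⊣ Y`, i.e. the bijection `(P ⟶ Fin(k, –)) ≃ (k → ∏ᵢ pᵢ)`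
      -- natural in `P` and `k`
      Nonempty (G ⊣ Y) := by
  exact ⟨PolyCat.globalSectionsFunctor, PolyCat.yoneda,
    fun _ _ _ _ e => ⟨PolyCat.globalSectionsIsoPiFin e⟩, fun _ => ⟨Iso.refl _⟩,
    ⟨PolyCat.globalSectionsAdjunction⟩⟩
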